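/- Let RG be a region graph satisfying Assumption 1 that is terminal-separable, and let {d_R ∈ F^3 : R ∈ Π} satisfy conditions (1)–(3) with d_R ≠ 0 for all R ∈ Π. Let 𝓘 = {[S_1],[S_2],[S_3],…,[R_K]} be a partition of Π (sources in three distinct classes) in which every class satisfies Property (a). Suppose Δ', Δ'' are classes of 𝓘 and there is a j ∈ {1,…,n} with Λ_j ⊆ [[Δ']] ∪ [[Δ'']], where [[Δ']] and [[Δ'']] are subclasses of Δ' and Δ'' respectively. Then ᾱ ∈ span{d_{P'}, d_{P''}} for every P' ∈ Λ_j ∩ [[Δ']] and every P'' ∈ Λ_j ∩ [[Δ'']]. -/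
import Mathlib


namespace SumNetworksPaper

/-- `SuperReg Adj Θ R` : `R` belongs to the super region generated by `Θ`:
the smallest set containing `Θ` and containing every vertex whose parent set
is nonempty and entirely contained in the set. -/
inductive SuperReg {V : Type} (Adj : V → V → Prop) (Θ : Set V) : V → Prop
  | base {R : V} : R ∈ Θ → SuperReg Adj Θ R
  | step {R : V} : (∃ P, Adj P R) → (∀ P, Adj P R → SuperReg Adj Θ P) →
      SuperReg Adj Θ R

/-- The super region `reg(Θ)` as a set. -/
def superReg {V : Type} (Adj : V → V → Prop) (Θ : Set V) : Set V :=
  {R | SuperReg Adj Θ R}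

/-- A region graph: a finite directed acyclic simple graph with three source
vertices `S 0, S 1, S 2` (which have no parents) and `n` terminal vertices
`T 0, …, T (n-1)`, in which every non-source vertex has at least two parents.
`Adj P R` means that there is an edge from `P` to `R`, i.e. `P` is a parent of `R`. -/
structure RegionGraph (n : ℕ) where
  V : Type
  fintypeV : Fintype V
  Adj : V → V → Prop
  acyclic : ∀ v : V, ¬ Relation.TransGen Adj v v
  S : Fin 3 → V
  T : Fin n → V
  S_inj : Function.Injective S
  T_inj : Function.Injective T
  source_no_parent : ∀ (i : Fin 3) (v : V), ¬ Adj v (S i)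
  two_parents : ∀ v : V, (∀ i : Fin 3, v ≠ S i) →
    ∃ p q : V, p ≠ q ∧ Adj p v ∧ Adj q v

namespace RegionGraph

variable {n : ℕ} (G : RegionGraph n)

/-- The super region `reg(Θ)`. -/
def reg (Θ : Set G.V) : Set G.V := superReg G.Adj Θ

/-- `reg°(Θ) = reg(Θ) ∖ Θ`. -/
def regO (Θ : Set G.V) : Set G.V := G.reg Θ \ Θ

/-- `reg(S_i, S_j)`. -/
def regPair (i j : Fin 3) : Set G.V := G.reg {G.S i, G.S j}

/-- `u → v` : there is a directed path from `u` to `v` (possibly trivial). -/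
def Reaches (u v : G.V) : Prop := Relation.ReflTransGen G.Adj u v

/-- `Π = reg(S_1,S_2) ∪ reg(S_1,S_3) ∪ reg(S_2,S_3)`. -/
def bigPi : Set G.V := G.regPair 0 1 ∪ G.regPair 0 2 ∪ G.regPair 1 2

/-- `Ω_I` : vertices outside `Π` reaching exactly the terminals `T j`, `j ∈ I`. -/
def Omega (I : Set (Fin n)) : Set G.V :=
  {R | R ∉ G.bigPi ∧ ∀ j : Fin n, j ∈ I ↔ G.Reaches R (G.T j)}

/-- `Λ_I` : vertices of `Π` having a child in `Ω_I`. -/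
def Lambda (I : Set (Fin n)) : Set G.V :=
  {Q | Q ∈ G.bigPi ∧ ∃ R, G.Adj Q R ∧ R ∈ G.Omega I}

/-- Assumption 1: no terminal vertex lies in `Π`. -/
def Assumption1 : Prop := ∀ j : Fin n, G.T j ∉ G.bigPi

/-- Terminal-separability: `Ω_I = ∅` whenever `|I| > 1`. -/
def TerminalSeparable : Prop :=
  ∀ I : Set (Fin n), 1 < I.ncard → G.Omega I = ∅

/-- A linear code of the region graph over `F`. -/
def IsLinearCode (F : Type) [Field F] (d : G.V → Fin 3 → F) : Prop :=
  (∀ i : Fin 3, d (G.S i) = Pi.single i 1) ∧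
  ∀ v : G.V, (∀ i : Fin 3, v ≠ G.S i) →
    d v ∈ Submodule.span F (d '' {p | G.Adj p v})

/-- A linear solution: a linear code giving `ᾱ = (1,1,1)` at every terminal. -/
def IsLinearSolution (F : Type) [Field F] (d : G.V → Fin 3 → F) : Prop :=
  G.IsLinearCode F d ∧ ∀ j : Fin n, d (G.T j) = fun _ => 1

/-- Feasibility: existence of a linear solution over some finite field. -/
def Feasible : Prop :=
  ∃ (F : Type) (_ : Field F) (_ : Fintype F) (d : G.V → Fin 3 → F),
    G.IsLinearSolution F d

/-- Conditions (1)–(3) on a family `{d_R : R ∈ Π}`. -/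
def Conds123 (F : Type) [Field F] (d : G.V → Fin 3 → F) : Prop :=
  (∀ i : Fin 3, d (G.S i) = Pi.single i 1) ∧
  (∀ R ∈ G.bigPi, (∀ i : Fin 3, R ≠ G.S i) →
    d R ∈ Submodule.span F (d '' {p | G.Adj p R})) ∧
  ∀ j : Fin n, (fun _ => (1 : F)) ∈ Submodule.span F (d '' G.Lambda {j})

/-- `I` is a partition of `Π` into nonempty classes. -/
def IsPartitionOfPi (I : Set (Set G.V)) : Prop :=
  (∀ Δ ∈ I, Δ.Nonempty ∧ Δ ⊆ G.bigPi) ∧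
  ⋃₀ I = G.bigPi ∧
  ∀ Δ ∈ I, ∀ Δ' ∈ I, Δ ≠ Δ' → Δ ∩ Δ' = ∅

/-- The three sources lie in three distinct classes of the partition. -/
def SourcesSeparated (I : Set (Set G.V)) : Prop :=
  ∀ Δ ∈ I, ∀ i j : Fin 3, G.S i ∈ Δ → G.S j ∈ Δ → i = j

/-- `[S_i]_i = [S_i]_{i,j₁} ∪ [S_i]_{i,j₂}` for the class `Δ` of `S_i`. -/
def srcSub (i : Fin 3) (Δ : Set G.V) : Set G.V :=
  Δ ∩ ⋃ (j : Fin 3) (_ : j ≠ i), G.regPair i j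

/-- `X` is a subclass of the class `Δ`. -/
def IsSubclass (Δ X : Set G.V) : Prop :=
  (∃ i : Fin 3, G.S i ∈ Δ ∧
    (X = G.srcSub i Δ ∨
      ∃ j k : Fin 3, j ≠ k ∧ j ≠ i ∧ k ≠ i ∧ X = Δ ∩ G.regPair j k)) ∨
  ((∀ i : Fin 3, G.S i ∉ Δ) ∧ ∃ i j : Fin 3, i ≠ j ∧ X = Δ ∩ G.regPair i j)

/-- The two classes `Δ'`, `Δ''` are connected. -/
def ClassesConnected (Δ' Δ'' : Set G.V) : Prop :=
  (∃ (j : Fin n) (X' X'' : Set G.V),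
      G.IsSubclass Δ' X' ∧ G.IsSubclass Δ'' X'' ∧ G.Lambda {j} ⊆ X' ∪ X'') ∨
  ∃ i j : Fin 3, i ≠ j ∧
    (G.reg (Δ' ∩ G.regPair i j) ∩ G.reg (Δ'' ∩ G.regPair i j)).Nonempty

/-- The partition `I` of `Π` is compatible. -/
def Compatible (I : Set (Set G.V)) : Prop :=
  G.SourcesSeparated I ∧
  (∀ Δ' ∈ I, ∀ Δ'' ∈ I, Δ' ≠ Δ'' → ¬ G.ClassesConnected Δ' Δ'') ∧
  ∀ (j : Fin n) (i₁ i₂ : Fin 3), i₁ ≠ i₂ →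
    ∀ Δ₁ ∈ I, ∀ Δ₂ ∈ I, G.S i₁ ∈ Δ₁ → G.S i₂ ∈ Δ₂ →
      ¬ (G.Lambda {j} ⊆ G.srcSub i₁ Δ₁ ∪ G.srcSub i₂ Δ₂ ∪
          ⋃₀ {X : Set G.V | ∃ Δ ∈ I, (∀ i : Fin 3, G.S i ∉ Δ) ∧
                X = Δ ∩ G.regPair i₁ i₂})

/-- `I'` is obtained from `I` by merging two connected classes. -/
def IsContractionStep (I I' : Set (Set G.V)) : Prop :=
  ∃ Δ' Δ'', Δ' ∈ I ∧ Δ'' ∈ I ∧ Δ' ≠ Δ'' ∧ G.ClassesConnected Δ' Δ'' ∧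
    I' = insert (Δ' ∪ Δ'') (I \ {Δ', Δ''})

/-- The trivial partition of `Π` into singletons. -/
def trivialPartition : Set (Set G.V) := {X | ∃ R ∈ G.bigPi, X = {R}}

/-- `Ic` is a character partition of `Π`. -/
def IsCharacterPartition (Ic : Set (Set G.V)) : Prop :=
  ∃ (L : ℕ) (c : ℕ → Set (Set G.V)),
    c 0 = G.trivialPartition ∧ c L = Ic ∧
    (∀ ℓ < L, G.SourcesSeparated (c ℓ) ∧ G.IsContractionStep (c ℓ) (c (ℓ + 1))) ∧
    ((∃ Δ ∈ Ic, ∃ i j : Fin 3, i ≠ j ∧ G.S i ∈ Δ ∧ G.S j ∈ Δ) ∨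
      ∀ Δ' ∈ Ic, ∀ Δ'' ∈ Ic, Δ' ≠ Δ'' → ¬ G.ClassesConnected Δ' Δ'')

/-- Property (a): `d_{Q'} ∈ span{d_Q, ᾱ}` for all `Q, Q'` in the class `Δ`. -/
def PropertyA (F : Type) [Field F] (d : G.V → Fin 3 → F) (Δ : Set G.V) : Prop :=
  ∀ Q ∈ Δ, ∀ Q' ∈ Δ, d Q' ∈ Submodule.span F {d Q, fun _ => (1 : F)}

end RegionGraph

/-- Condition (C-IR) for a region graph with three terminals. -/
def RegionGraph.CIR (G : RegionGraph 3) : Prop :=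
  ∃ (σ τ : Equiv.Perm (Fin 3)) (P₁ P₂ : G.V),
    P₁ ∈ G.regO {G.S (σ 1), G.S (σ 2)} ∧
    P₂ ∈ G.regO {G.S (σ 0), G.S (σ 1)} ∧
    G.Lambda {τ 0} = {G.S (σ 0), P₁} ∧
    G.Lambda {τ 1} = {P₁, P₂} ∧
    G.Lambda {τ 2} ⊆ G.reg {G.S (σ 0), P₂} ∪ G.reg {G.S (σ 0), G.S (σ 2)}



namespace RegionGraph

variable {n : ℕ} (G : RegionGraph n)

lemma exists_third : ∀ a b : Fin 3, a ≠ b → ∃ k : Fin 3, k ≠ a ∧ k ≠ b := by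
  decide

lemma regPair_comm (i j : Fin 3) : G.regPair i j = G.regPair j i := by
  unfold regPair; rw [Set.pair_comm]

lemma regPair_subset_bigPi {i j : Fin 3} (hij : i ≠ j) :
    G.regPair i j ⊆ G.bigPi := by
  have h01 : G.regPair 0 1 ⊆ G.bigPi := fun x hx => Or.inl (Or.inl hx)
  have h02 : G.regPair 0 2 ⊆ G.bigPi := fun x hx => Or.inl (Or.inr hx)
  have h12 : G.regPair 1 2 ⊆ G.bigPi := fun x hx => Or.inr hx
  fin_cases i <;> fin_cases j <;>
    simp_all [G.regPair_comm 1 0, G.regPair_comm 2 0, G.regPair_comm 2 1]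

lemma d_coord_zero {F : Type} [Field F] (d : G.V → Fin 3 → F)
    (h1 : ∀ i : Fin 3, d (G.S i) = Pi.single i 1)
    (h2 : ∀ R ∈ G.bigPi, (∀ i : Fin 3, R ≠ G.S i) →
      d R ∈ Submodule.span F (d '' {p | G.Adj p R}))
    {i j k : Fin 3} (hij : i ≠ j) (hki : k ≠ i) (hkj : k ≠ j)
    {R : G.V} (hR : R ∈ G.regPair i j) : d R k = 0 := by
  induction hR with
  | base hmem =>
    simp only [Set.mem_insert_iff, Set.mem_singleton_iff] at hmem
    rcases hmem with rfl | rfl <;> rw [h1] <;> simp [Pi.single_apply, hki, hkj]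
  | @step R hex hpar IH =>
    have hbig : R ∈ G.bigPi :=
      G.regPair_subset_bigPi hij (SuperReg.step hex hpar)
    have hns : ∀ m : Fin 3, R ≠ G.S m := by
      intro m hm
      obtain ⟨P, hP⟩ := hex
      exact G.source_no_parent m P (hm ▸ hP)
    have hmem := h2 R hbig hns
    have hle : Submodule.span F (d '' {p | G.Adj p R}) ≤
        LinearMap.ker (LinearMap.proj (R := F) (φ := fun _ : Fin 3 => F) k) := by
      rw [Submodule.span_le]
      rintro _ ⟨P, hP, rfl⟩
      exact IH P hP
    exact hle hmem

lemma pair_span {F : Type} [Field F] (d : G.V → Fin 3 → F)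
    (h1 : ∀ i : Fin 3, d (G.S i) = Pi.single i 1)
    (h2 : ∀ R ∈ G.bigPi, (∀ i : Fin 3, R ≠ G.S i) →
      d R ∈ Submodule.span F (d '' {p | G.Adj p R}))
    (Δ : Set G.V) (hPA : G.PropertyA F d Δ)
    {a b : Fin 3} (hab : a ≠ b) :
    ∀ P ∈ Δ ∩ G.regPair a b, ∀ Q ∈ Δ ∩ G.regPair a b,
      d Q ∈ Submodule.span F {d P} := by
  intro P hP Q hQ
  obtain ⟨k, hka, hkb⟩ := exists_third a b hab
  have hspan := hPA P hP.1 Q hQ.1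
  rw [Submodule.mem_span_pair] at hspan
  obtain ⟨c, e, hce⟩ := hspan
  have hQk : d Q k = 0 := G.d_coord_zero d h1 h2 hab hka hkb hQ.2
  have hPk : d P k = 0 := G.d_coord_zero d h1 h2 hab hka hkb hP.2
  have he : e = 0 := by
    have := congrFun hce k
    simp [hPk, hQk] at this
    first | exact this | exact this.symm
  rw [Submodule.mem_span_singleton]
  exact ⟨c, by rw [← hce, he]; simp⟩

lemma srcSub_coord_zero {F : Type} [Field F] (d : G.V → Fin 3 → F)
    (h1 : ∀ i : Fin 3, d (G.S i) = Pi.single i 1)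
    (h2 : ∀ R ∈ G.bigPi, (∀ i : Fin 3, R ≠ G.S i) →
      d R ∈ Submodule.span F (d '' {p | G.Adj p R}))
    (Δ : Set G.V) (hPA : G.PropertyA F d Δ)
    {i : Fin 3} (hSi : G.S i ∈ Δ) :
    ∀ Q ∈ G.srcSub i Δ, ∀ k : Fin 3, k ≠ i → d Q k = 0 := by
  intro Q hQ k hki
  obtain ⟨hQΔ, hQU⟩ := hQ
  simp only [Set.mem_iUnion] at hQU
  obtain ⟨j, hji, hQp⟩ := hQU
  have hspan := hPA (G.S i) hSi Q hQΔ
  rw [h1, Submodule.mem_span_pair] at hspan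
  obtain ⟨c, e, hce⟩ := hspan
  obtain ⟨m, hmi, hmj⟩ := exists_third i j (fun h => hji h.symm)
  have hQm : d Q m = 0 :=
    G.d_coord_zero d h1 h2 (fun h => hji h.symm) hmi hmj hQp
  have he : e = 0 := by
    have := congrFun hce m
    simp [Pi.single_apply, hmi, hQm] at this
    first | exact this | exact this.symm
  have := congrFun hce k
  simp [Pi.single_apply, hki, he] at this
  simpa using this.symm

lemma subclass_span {F : Type} [Field F] (d : G.V → Fin 3 → F)
    (hd : G.Conds123 F d) (hnz : ∀ R ∈ G.bigPi, d R ≠ 0)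
    (Δ X : Set G.V) (hΔsub : Δ ⊆ G.bigPi) (hPA : G.PropertyA F d Δ)
    (hX : G.IsSubclass Δ X) :
    ∀ P ∈ X, ∀ Q ∈ X, d Q ∈ Submodule.span F {d P} := by
  obtain ⟨h1, h2, _⟩ := hd
  rcases hX with ⟨i, hSi, rfl | ⟨a, b, hab, _, _, rfl⟩⟩ | ⟨_, a, b, hab, rfl⟩
  · -- srcSub case
    intro P hP Q hQ
    have hPz := G.srcSub_coord_zero d h1 h2 Δ hPA hSi P hP
    have hQz := G.srcSub_coord_zero d h1 h2 Δ hPA hSi Q hQ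
    have hPi : d P i ≠ 0 := by
      intro h0
      apply hnz P (hΔsub hP.1)
      funext k
      by_cases hk : k = i
      · rw [hk, h0]; rfl
      · exact hPz k hk
    rw [Submodule.mem_span_singleton]
    refine ⟨d Q i * (d P i)⁻¹, funext fun k => ?_⟩
    by_cases hk : k = i
    · subst hk; simp [smul_eq_mul]; field_simp
    · simp [hPz k hk, hQz k hk, smul_eq_mul]
  · exact G.pair_span d h1 h2 Δ hPA hab
  · exact G.pair_span d h1 h2 Δ hPA hab

end RegionGraph

/-- If all classes of a partition of `Π` satisfy Property (a) and
`Λ_j ⊆ [[Δ']] ∪ [[Δ'']]` for subclasses of classes `Δ'`, `Δ''`, then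
`ᾱ ∈ span{d_{P'}, d_{P''}}` for all `P' ∈ Λ_j ∩ [[Δ']]`, `P'' ∈ Λ_j ∩ [[Δ'']]`. -/
theorem lambda_two_subclasses {n : ℕ} (G : RegionGraph n)
    (hA : G.Assumption1) (hTS : G.TerminalSeparable)
    (F : Type) [Field F] [Fintype F] (d : G.V → Fin 3 → F)
    (hd : G.Conds123 F d) (hnz : ∀ R ∈ G.bigPi, d R ≠ 0)
    (I : Set (Set G.V)) (hpart : G.IsPartitionOfPi I)
    (hsep : G.SourcesSeparated I)
    (hall : ∀ Δ ∈ I, G.PropertyA F d Δ)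
    (Δ' Δ'' : Set G.V) (hΔ' : Δ' ∈ I) (hΔ'' : Δ'' ∈ I)
    (j : Fin n) (X' X'' : Set G.V)
    (hX' : G.IsSubclass Δ' X') (hX'' : G.IsSubclass Δ'' X'')
    (hsub : G.Lambda {j} ⊆ X' ∪ X'') :
    ∀ P' ∈ G.Lambda {j} ∩ X', ∀ P'' ∈ G.Lambda {j} ∩ X'',
      (fun _ => (1 : F)) ∈ Submodule.span F {d P', d P''} := by
  intro P' hP' P'' hP''
  have hΔ'sub : Δ' ⊆ G.bigPi := (hpart.1 Δ' hΔ').2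
  have hΔ''sub : Δ'' ⊆ G.bigPi := (hpart.1 Δ'' hΔ'').2
  have hspan' := G.subclass_span d hd hnz Δ' X' hΔ'sub (hall Δ' hΔ') hX' P' hP'.2
  have hspan'' := G.subclass_span d hd hnz Δ'' X'' hΔ''sub (hall Δ'' hΔ'') hX'' P'' hP''.2
  have hle : Submodule.span F (d '' G.Lambda {j}) ≤ Submodule.span F {d P', d P''} := by
    rw [Submodule.span_le]
    rintro _ ⟨Q, hQ, rfl⟩
    have hs1 : ({d P'} : Set (Fin 3 → F)) ⊆ {d P', d P''} := fun x hx => Or.inl hx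
    have hs2 : ({d P''} : Set (Fin 3 → F)) ⊆ {d P', d P''} := fun x hx => Or.inr hx
    rcases hsub hQ with hQ' | hQ''
    · exact Submodule.span_mono hs1 (hspan' Q hQ')
    · exact Submodule.span_mono hs2 (hspan'' Q hQ'')
  exact hle (hd.2.2 j)

end SumNetworksPaper
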